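/- Let H₁, …, H_m ∈ L(B, B*) be positive operators and let α₁, …, α_m, β₁, …, β_m be complex numbers with |α_j| ≤ |β_j| for each j. Then ‖∑_{j=1}^m α_j H_j‖ ≤ ‖∑_{j=1}^m |β_j| H_j‖. -/

import Mathlib

/-!
A positive form `φ` is Hermitian by polarization, hence a semi-inner product, so
`|φ(b, c)|² ≤ φ(b, b) φ(c, c)`. Summing with the weights `|α_j| ≤ |β_j|` and applying
Cauchy–Schwarz in `ℝ^m` gives `|∑ α_j H_j(b, c)| ≤ K(b, b)^{1/2} K(c, c)^{1/2}` for
`K = ∑ |β_j| H_j`, and `K(b, b) ≤ ‖K‖ ‖b‖²`.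
-/

open scoped ComplexOrder

/-- The conjugate dual of a complex normed space: continuous anti-linear functionals. -/
abbrev ConjDual (B : Type*) [NormedAddCommGroup B] [NormedSpace ℂ B] :=
  B →SL[starRingEnd ℂ] ℂ

open ComplexConjugate

namespace ContinuousLinearMap

section Sesquilinear

variable {E : Type*} [TopologicalSpace E] [AddCommGroup E] [Module ℂ E]

lemma conj_apply_apply_of_nonneg (φ : E →L[ℂ] E →L⋆[ℂ] ℂ) (hφ : ∀ b, 0 ≤ φ b b) (b c : E) :
    conj (φ b c) = φ c b := by
  have expand (t : ℂ) : φ (b + t • c) (b + t • c) =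
      φ b b + conj t * φ b c + t * φ c b + t * conj t * φ c c := by
    simp only [map_add, map_smul, map_smulₛₗ, add_apply, smul_apply, smul_eq_mul]
    ring
  have h1 := Complex.nonneg_iff.1 (hφ (b + (1 : ℂ) • c))
  have hI := Complex.nonneg_iff.1 (hφ (b + Complex.I • c))
  have hb := Complex.nonneg_iff.1 (hφ b)
  have hc := Complex.nonneg_iff.1 (hφ c)
  rw [expand] at h1 hI
  simp only [map_one, one_mul, mul_one, Complex.add_im, Complex.conj_I, neg_mul, mul_neg,
    Complex.I_mul_I, neg_neg, Complex.neg_im, Complex.mul_im, Complex.I_re, Complex.I_im, zero_mul,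
    zero_add] at h1 hI
  apply Complex.ext <;> simp only [Complex.conj_re, Complex.conj_im] <;> linarith

/-- Mathlib's inner product is conjugate-linear in its first argument, hence the swap. -/
noncomputable abbrev preInnerProductSpaceCore (φ : E →L[ℂ] E →L⋆[ℂ] ℂ)
    (hφ : ∀ b, 0 ≤ φ b b) : PreInnerProductSpace.Core ℂ E where
  inner x y := φ y x
  conj_inner_symm x y := conj_apply_apply_of_nonneg φ hφ x y
  re_inner_nonneg x := (Complex.nonneg_iff.1 (hφ x)).1
  add_left x y z := map_add (φ z) x y
  smul_left x y r := map_smulₛₗ (φ y) r x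

lemma norm_apply_apply_le_sqrt_mul_sqrt (φ : E →L[ℂ] E →L⋆[ℂ] ℂ) (hφ : ∀ b, 0 ≤ φ b b)
    (b c : E) : ‖φ b c‖ ≤ √(φ b b).re * √(φ c c).re := by
  have h := @InnerProductSpace.Core.inner_mul_inner_self_le ℂ E _ _ _
    (preInnerProductSpaceCore φ hφ) c b
  change ‖φ b c‖ * ‖φ c b‖ ≤ (φ c c).re * (φ b b).re at h
  rw [← conj_apply_apply_of_nonneg φ hφ b c, Complex.norm_conj, mul_comm (φ c c).re] at h
  rw [← Real.sqrt_mul (Complex.nonneg_iff.1 (hφ b)).1]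
  exact Real.le_sqrt_of_sq_le (by rw [sq]; exact h)

lemma norm_sum_smul_apply_apply_le_sqrt_mul_sqrt {ι : Type*} [Fintype ι]
    (H : ι → E →L[ℂ] E →L⋆[ℂ] ℂ) (hH : ∀ j b, 0 ≤ H j b b) (α : ι → ℂ) (w : ι → ℝ)
    (hαw : ∀ j, ‖α j‖ ≤ w j) (b c : E) :
    ‖(∑ j, α j • H j) b c‖ ≤
      √((∑ j, (w j : ℂ) • H j) b b).re * √((∑ j, (w j : ℂ) • H j) c c).re := by
  have hw j : 0 ≤ w j := (norm_nonneg _).trans (hαw j)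
  have hre j x : 0 ≤ (H j x x).re := (Complex.nonneg_iff.1 (hH j x)).1
  have re_sum x : ((∑ j, (w j : ℂ) • H j) x x).re = ∑ j, w j * (H j x x).re := by
    simp only [sum_apply, smul_apply, smul_eq_mul, Complex.re_sum, Complex.re_ofReal_mul]
  have term j : ‖α j‖ * ‖H j b c‖ ≤ √(w j * (H j b b).re) * √(w j * (H j c c).re) := calc
    ‖α j‖ * ‖H j b c‖ ≤ w j * (√(H j b b).re * √(H j c c).re) :=
      mul_le_mul (hαw j) (norm_apply_apply_le_sqrt_mul_sqrt (H j) (hH j) b c) (norm_nonneg _)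
        (hw j)
    _ = √(w j * (H j b b).re) * √(w j * (H j c c).re) := by
      rw [Real.sqrt_mul (hw j), Real.sqrt_mul (hw j), mul_mul_mul_comm,
        Real.mul_self_sqrt (hw j)]
  calc ‖(∑ j, α j • H j) b c‖ = ‖∑ j, α j * H j b c‖ := by
        simp only [sum_apply, smul_apply, smul_eq_mul]
    _ ≤ ∑ j, ‖α j‖ * ‖H j b c‖ := norm_sum_le_of_le _ fun j _ => (norm_mul _ _).le
    _ ≤ ∑ j, √(w j * (H j b b).re) * √(w j * (H j c c).re) :=
      Finset.sum_le_sum fun j _ => term j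
    _ ≤ √(∑ j, w j * (H j b b).re) * √(∑ j, w j * (H j c c).re) :=
      Real.sum_sqrt_mul_sqrt_le _ (fun j => mul_nonneg (hw j) (hre j b))
        fun j => mul_nonneg (hw j) (hre j c)
    _ = _ := by rw [re_sum, re_sum]

end Sesquilinear

lemma opNorm_le_of_norm_apply_apply_le_sqrt_mul_sqrt {E : Type*} [SeminormedAddCommGroup E]
    [NormedSpace ℂ E] {L K : E →L[ℂ] E →L⋆[ℂ] ℂ}
    (h : ∀ b c, ‖L b c‖ ≤ √(K b b).re * √(K c c).re) : ‖L‖ ≤ ‖K‖ := by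
  have sqrt_re_le x : √(K x x).re ≤ √‖K‖ * ‖x‖ := by
    rw [← Real.sqrt_mul_self (norm_nonneg x), ← Real.sqrt_mul (norm_nonneg K), ← mul_assoc]
    exact Real.sqrt_le_sqrt ((Complex.re_le_norm _).trans (K.le_opNorm₂ x x))
  refine opNorm_le_bound₂ L (norm_nonneg K) fun b c => (h b c).trans ?_
  calc √(K b b).re * √(K c c).re ≤ (√‖K‖ * ‖b‖) * (√‖K‖ * ‖c‖) :=
        mul_le_mul (sqrt_re_le b) (sqrt_re_le c) (Real.sqrt_nonneg _) (by positivity)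
    _ = ‖K‖ * ‖b‖ * ‖c‖ := by
      rw [mul_mul_mul_comm, Real.mul_self_sqrt (norm_nonneg K), mul_assoc]

end ContinuousLinearMap

theorem positive_op_comb_norm_le {B : Type*} [NormedAddCommGroup B] [NormedSpace ℂ B]
    (m : ℕ) (H : Fin m → (B →L[ℂ] ConjDual B))
    (hH : ∀ j, ∀ b : B, 0 ≤ H j b b)
    (α β : Fin m → ℂ) (hαβ : ∀ j, ‖α j‖ ≤ ‖β j‖) :
    ‖∑ j, α j • H j‖ ≤ ‖∑ j, ((‖β j‖ : ℝ) : ℂ) • H j‖ :=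
  ContinuousLinearMap.opNorm_le_of_norm_apply_apply_le_sqrt_mul_sqrt
    (ContinuousLinearMap.norm_sum_smul_apply_apply_le_sqrt_mul_sqrt H hH α (‖β ·‖) hαβ)
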